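/- Let (m_i)_{i∈ℕ} be a sequence of natural numbers with m_0 = 0 and m_{i+1} > 2^{m_i} for all i, and let b̄ ∈ divs satisfy b_ℓ ≤ 2^{−m_i} for all i and all ℓ ≥ m_{i+1}. Define the set of discretized divergent series divs^m_discr = { ē ∈ divs : for every i ≥ 1 and every ℓ ∈ [m_i, m_{i+1}), e_ℓ ∈ { j/2^{m_{i+1}} : j = 0, 1, …, 2^{m_{i+1}−m_{i−1}} } }. Then divs^m_discr is dense below b̄ in (divs, ≤*): for every c̄ ∈ divs with c̄ ≤* b̄ there exists ē ∈ divs^m_discr with ē ≤* c̄. -/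

import Mathlib

open Filter

/-- `Divs c` says that `c` is a sequence of nonnegative reals converging to `0`
whose series diverges, i.e. `c ∈ divs`. -/
def Divs (c : ℕ → ℝ) : Prop :=
  (∀ n, 0 ≤ c n) ∧ Tendsto c atTop (nhds 0) ∧
    Tendsto (fun N => ∑ n ∈ Finset.range N, c n) atTop atTop

/-- `LeStar d c` is the eventual dominance relation `d ≤* c`. -/
def LeStar (d c : ℕ → ℝ) : Prop := ∀ᶠ n in atTop, d n ≤ c n

/-- Membership in the set of discretized divergent series `divs^m̄_discr`:
`e ∈ divs` and for every `i ≥ 1` and `ℓ ∈ [m_i, m_{i+1})`, the value `e ℓ` is of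
the form `j/2^{m_{i+1}}` for some `0 ≤ j ≤ 2^{m_{i+1} − m_{i−1}}`. -/
def MemDivsDiscr (m : ℕ → ℕ) (e : ℕ → ℝ) : Prop :=
  Divs e ∧ ∀ i, 1 ≤ i → ∀ ℓ ∈ Set.Ico (m i) (m (i + 1)),
    ∃ j : ℕ, j ≤ 2 ^ (m (i + 1) - m (i - 1)) ∧ e ℓ = (j : ℝ) / 2 ^ m (i + 1)

/-!
Round `min c b` down to the dyadic grid of mesh `2^{-m_{i+1}}` on the block `[m_i, m_{i+1})`.
The result stays below `c`, and on that block `b ≤ 2^{-m_{i-1}}` bounds the numerators by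
`2^{m_{i+1} - m_{i-1}}`. Since `ℓ < m_{i+1}`, the rounding error at `ℓ` is below `2^{-ℓ}`,
a summable sequence, so the rounded series still diverges because `min c b` is eventually `c`.
-/

open Finset

theorem tendsto_sum_range_atTop_of_eventually_le_add {c e ε : ℕ → ℝ} (hc0 : ∀ n, 0 ≤ c n)
    (he0 : ∀ n, 0 ≤ e n) (hε : Summable ε) (hce : ∀ᶠ n in atTop, c n ≤ e n + ε n)
    (hc : Tendsto (fun N => ∑ n ∈ range N, c n) atTop atTop) :
    Tendsto (fun N => ∑ n ∈ range N, e n) atTop atTop := by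
  rw [← not_summable_iff_tendsto_nat_atTop_of_nonneg he0]
  rw [← not_summable_iff_tendsto_nat_atTop_of_nonneg hc0] at hc
  refine fun he => hc (Summable.of_norm_bounded_eventually_nat (he.add hε) ?_)
  filter_upwards [hce] with n hn
  rwa [Real.norm_of_nonneg (hc0 n)]

section DyadicFloor

/-- Rounds `x` down to a multiple of `2^{-k}`; negative `x` go to `0`. -/
noncomputable def dyadicFloor (k : ℕ) (x : ℝ) : ℝ := ⌊x * 2 ^ k⌋₊ / 2 ^ k

variable {k : ℕ} {x : ℝ}

theorem dyadicFloor_nonneg : 0 ≤ dyadicFloor k x := by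
  unfold dyadicFloor
  positivity

theorem dyadicFloor_le (hx : 0 ≤ x) : dyadicFloor k x ≤ x := by
  rw [dyadicFloor, div_le_iff₀ (by positivity)]
  exact Nat.floor_le (by positivity)

theorem le_dyadicFloor_add : x ≤ dyadicFloor k x + (1 / 2) ^ k := by
  have h := Nat.lt_floor_add_one (x * 2 ^ k)
  rw [dyadicFloor, one_div_pow, ← add_div, le_div_iff₀ (by positivity)]
  exact h.le

theorem floor_mul_two_pow_le {a : ℕ} (hx : x ≤ 1 / 2 ^ a) (hak : a ≤ k) :
    ⌊x * 2 ^ k⌋₊ ≤ 2 ^ (k - a) := by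
  refine Nat.floor_le_of_le ?_
  calc x * 2 ^ k ≤ 1 / 2 ^ a * 2 ^ k := by gcongr
    _ = 2 ^ (k - a) := by
      rw [← Nat.sub_add_cancel hak, pow_add, Nat.add_sub_cancel]
      field_simp
    _ = _ := by norm_cast

end DyadicFloor

section BlockIndex

def blockIndex (m : ℕ → ℕ) (ℓ : ℕ) : ℕ := Nat.findGreatest (fun i => m i ≤ ℓ) ℓ

variable {m : ℕ → ℕ}

theorem apply_blockIndex_le (hm0 : m 0 = 0) (ℓ : ℕ) : m (blockIndex m ℓ) ≤ ℓ :=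
  Nat.findGreatest_spec (P := fun i => m i ≤ ℓ) (Nat.zero_le ℓ) (by simp [hm0])

theorem lt_apply_blockIndex_succ (hm : StrictMono m) (ℓ : ℕ) : ℓ < m (blockIndex m ℓ + 1) := by
  by_contra! h
  exact Nat.findGreatest_is_greatest (Nat.lt_succ_self _) ((hm.id_le _).trans h) h

theorem blockIndex_eq (hm0 : m 0 = 0) (hm : StrictMono m) {i ℓ : ℕ} (hiℓ : m i ≤ ℓ)
    (hℓi : ℓ < m (i + 1)) : blockIndex m ℓ = i := by
  have h₁ := apply_blockIndex_le hm0 ℓ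
  have h₂ := lt_apply_blockIndex_succ hm ℓ
  rcases lt_trichotomy (blockIndex m ℓ) i with h | h | h
  · have := hm.monotone (show blockIndex m ℓ + 1 ≤ i by omega)
    omega
  · exact h
  · have := hm.monotone (show i + 1 ≤ blockIndex m ℓ by omega)
    omega

end BlockIndex

section Discretize

noncomputable def discretize (m : ℕ → ℕ) (d : ℕ → ℝ) (ℓ : ℕ) : ℝ :=
  dyadicFloor (m (blockIndex m ℓ + 1)) (d ℓ)

variable {m : ℕ → ℕ} {d : ℕ → ℝ}

theorem le_discretize_add (hm : StrictMono m) (ℓ : ℕ) :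
    d ℓ ≤ discretize m d ℓ + (1 / 2) ^ ℓ := calc
  d ℓ ≤ discretize m d ℓ + (1 / 2) ^ m (blockIndex m ℓ + 1) := le_dyadicFloor_add
  _ ≤ discretize m d ℓ + (1 / 2) ^ ℓ := by
    gcongr _ + ?_
    exact pow_le_pow_of_le_one (by norm_num) (by norm_num) (lt_apply_blockIndex_succ hm ℓ).le

theorem discretize_mem_grid (hm0 : m 0 = 0) (hm : StrictMono m)
    (hd : ∀ i ℓ, m (i + 1) ≤ ℓ → d ℓ ≤ 1 / 2 ^ m i) :
    ∀ i, 1 ≤ i → ∀ ℓ ∈ Set.Ico (m i) (m (i + 1)),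
      ∃ j : ℕ, j ≤ 2 ^ (m (i + 1) - m (i - 1)) ∧ discretize m d ℓ = (j : ℝ) / 2 ^ m (i + 1) := by
  rintro i hi ℓ ⟨hiℓ, hℓi⟩
  obtain ⟨i, rfl⟩ : ∃ i', i = i' + 1 := ⟨i - 1, by omega⟩
  refine ⟨_, floor_mul_two_pow_le (hd i ℓ hiℓ) (hm.monotone (by omega)), ?_⟩
  rw [discretize, blockIndex_eq hm0 hm hiℓ hℓi, dyadicFloor]

end Discretize

theorem divsDiscr_dense_below (m : ℕ → ℕ) (hm0 : m 0 = 0)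
    (hm : ∀ i, 2 ^ m i < m (i + 1))
    (b : ℕ → ℝ) (hb : Divs b)
    (hbd : ∀ i, ∀ ℓ, m (i + 1) ≤ ℓ → b ℓ ≤ 1 / 2 ^ m i)
    (c : ℕ → ℝ) (hc : Divs c) (hcb : LeStar c b) :
    ∃ e : ℕ → ℝ, MemDivsDiscr m e ∧ LeStar e c := by
  have hmono : StrictMono m := strictMono_nat_of_lt_succ fun i => Nat.lt_two_pow_self.trans (hm i)
  obtain ⟨hc0, hc_lim, hc_sum⟩ := hc
  set d : ℕ → ℝ := fun n => min (c n) (b n)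
  have he0 : ∀ n, 0 ≤ discretize m d n := fun n => dyadicFloor_nonneg
  have hec : ∀ n, discretize m d n ≤ c n := fun n =>
    (dyadicFloor_le (le_min (hc0 n) (hb.1 n))).trans (min_le_left _ _)
  have he_lim : Tendsto (discretize m d) atTop (nhds 0) :=
    tendsto_of_tendsto_of_tendsto_of_le_of_le tendsto_const_nhds hc_lim he0 hec
  have he_sum : Tendsto (fun N => ∑ n ∈ range N, discretize m d n) atTop atTop := by
    refine tendsto_sum_range_atTop_of_eventually_le_add hc0 he0 summable_geometric_two ?_ hc_sum
    filter_upwards [hcb] with n hn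
    simpa [d, min_eq_left hn] using le_discretize_add (d := d) hmono n
  exact ⟨discretize m d, ⟨⟨he0, he_lim, he_sum⟩, discretize_mem_grid hm0 hmono fun i ℓ hℓ =>
    (min_le_right _ _).trans (hbd i ℓ hℓ)⟩, .of_forall hec⟩
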